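/- Let D ≥ 1 be an integer, let φ : ℝ_+^D → ℝ be Lipschitz and ℝ_+^D-increasing, let H : ℝ_+^D → ℝ be locally Lipschitz, ℝ_+^D-increasing, convex and bounded below, and let t ≥ 0. Then for every x ∈ ℝ_+^D, sup_{y ∈ ℝ_+^D} { φ(x+y) − (tH)*(y) } = sup_{x' ∈ ℝ_+^D} { φ(x') − (tH)*(x'−x) }, where (tH)*(y) = sup_{p ∈ ℝ_+^D} (p·y − tH(p)). -/

import Mathlib

open MeasureTheory
open scoped NNReal

/-- The nonnegative orthant `ℝ_+^D` in `ℝ^D`. -/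
def orthant (D : ℕ) : Set (EuclideanSpace ℝ (Fin D)) := {x | ∀ i, 0 ≤ x i}

/-- The monotone conjugate `(tH)*(y) = sup_{p ∈ ℝ_+^D} (p·y − tH(p))`, valued in
`ℝ ∪ {+∞}` (formalized as `EReal`). -/
noncomputable def tConj (D : ℕ) (t : ℝ) (H : EuclideanSpace ℝ (Fin D) → ℝ)
    (y : EuclideanSpace ℝ (Fin D)) : EReal :=
  ⨆ p : orthant D, (((inner ℝ p.1 y : ℝ) - t * H p.1 : ℝ) : EReal)

/-!
Since `p ≥ 0`, `(tH)*` is increasing, and since `H` is increasing one may drop the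
coordinates of `p` where `y` is negative, so `(tH)*(y) = (tH)*(y⁺)` for the coordinatewise
positive part `y⁺`. Hence a competitor `x'` on the right is beaten by `x + (x' - x)⁺ ≥ x'`
on the left, as `φ` is increasing.
-/

variable {D : ℕ}

lemma add_mem_orthant {x y : EuclideanSpace ℝ (Fin D)} (hx : x ∈ orthant D)
    (hy : y ∈ orthant D) : x + y ∈ orthant D :=
  fun i => by simpa using add_nonneg (hx i) (hy i)

lemma inner_nonneg_of_mem_orthant {p y : EuclideanSpace ℝ (Fin D)} (hp : p ∈ orthant D)
    (hy : y ∈ orthant D) : 0 ≤ inner ℝ p y := by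
  simp only [PiLp.inner_apply, RCLike.inner_apply, conj_trivial]
  exact Finset.sum_nonneg fun i _ => mul_nonneg (hy i) (hp i)

def coordPosPart (y : EuclideanSpace ℝ (Fin D)) : EuclideanSpace ℝ (Fin D) :=
  WithLp.toLp 2 fun i => max (y i) 0

lemma coordPosPart_mem_orthant (y : EuclideanSpace ℝ (Fin D)) : coordPosPart y ∈ orthant D :=
  fun _ => le_max_right _ _

lemma coordPosPart_sub_self_mem_orthant (y : EuclideanSpace ℝ (Fin D)) :
    coordPosPart y - y ∈ orthant D :=
  fun i => by simp [coordPosPart]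

lemma tConj_mono (t : ℝ) (H : EuclideanSpace ℝ (Fin D) → ℝ) {y y' : EuclideanSpace ℝ (Fin D)}
    (h : y' - y ∈ orthant D) : tConj D t H y ≤ tConj D t H y' := by
  refine iSup_le fun p => le_iSup_of_le p (EReal.coe_le_coe_iff.mpr ?_)
  have := inner_nonneg_of_mem_orthant p.2 h
  rw [inner_sub_right] at this
  linarith

lemma tConj_coordPosPart_le {t : ℝ} (ht : 0 ≤ t) {H : EuclideanSpace ℝ (Fin D) → ℝ}
    (hHmono : ∀ x ∈ orthant D, ∀ y ∈ orthant D, H x ≤ H (x + y))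
    (y : EuclideanSpace ℝ (Fin D)) : tConj D t H (coordPosPart y) ≤ tConj D t H y := by
  refine iSup_le fun ⟨p, hp⟩ => ?_
  -- `p'` keeps the coordinates of `p` where `y ≥ 0`: it pairs with `y` as `p` with `y⁺`.
  set p' : EuclideanSpace ℝ (Fin D) := WithLp.toLp 2 fun i => if 0 ≤ y i then p i else 0
  have hp' : p' ∈ orthant D := fun i => by
    by_cases h : 0 ≤ y i <;> simp [p', h, hp i]
  have hinner : inner ℝ p (coordPosPart y) = inner ℝ p' y := by
    simp only [PiLp.inner_apply, RCLike.inner_apply, conj_trivial]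
    refine Finset.sum_congr rfl fun i _ => ?_
    by_cases h : 0 ≤ y i
    · simp [p', coordPosPart, h]
    · simp [p', coordPosPart, h, (lt_of_not_ge h).le]
  have hH : H p' ≤ H p := by
    have hd : p - p' ∈ orthant D := fun i => by
      by_cases h : 0 ≤ y i <;> simp [p', h, hp i]
    simpa using hHmono p' hp' (p - p') hd
  refine le_iSup_of_le ⟨p', hp'⟩ (EReal.coe_le_coe_iff.mpr ?_)
  rw [hinner]
  exact sub_le_sub_left (mul_le_mul_of_nonneg_left hH ht) _

lemma tConj_coordPosPart {t : ℝ} (ht : 0 ≤ t) {H : EuclideanSpace ℝ (Fin D) → ℝ}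
    (hHmono : ∀ x ∈ orthant D, ∀ y ∈ orthant D, H x ≤ H (x + y))
    (y : EuclideanSpace ℝ (Fin D)) : tConj D t H (coordPosPart y) = tConj D t H y :=
  (tConj_coordPosPart_le ht hHmono y).antisymm
    (tConj_mono t H (coordPosPart_sub_self_mem_orthant y))

theorem hopfLax_eq_shifted_general (D : ℕ)
    (φ : EuclideanSpace ℝ (Fin D) → ℝ)
    (hφmono : ∀ x ∈ orthant D, ∀ y ∈ orthant D, φ x ≤ φ (x + y))
    (H : EuclideanSpace ℝ (Fin D) → ℝ)
    (hHmono : ∀ x ∈ orthant D, ∀ y ∈ orthant D, H x ≤ H (x + y))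
    (t : ℝ) (ht : 0 ≤ t)
    (x : EuclideanSpace ℝ (Fin D)) (hx : x ∈ orthant D) :
    (⨆ y : orthant D, ((φ (x + y.1) : EReal) - tConj D t H y.1)) =
      ⨆ x' : orthant D, ((φ x'.1 : EReal) - tConj D t H (x'.1 - x)) := by
  apply le_antisymm
  · refine iSup_le fun ⟨y, hy⟩ => le_iSup_of_le ⟨x + y, add_mem_orthant hx hy⟩ ?_
    simp
  · refine iSup_le fun ⟨x', hx'⟩ =>
      le_iSup_of_le ⟨coordPosPart (x' - x), coordPosPart_mem_orthant _⟩ ?_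
    have hφ : φ x' ≤ φ (x + coordPosPart (x' - x)) := by
      have hz : x + coordPosPart (x' - x) - x' = coordPosPart (x' - x) - (x' - x) := by abel
      have := hφmono x' hx' _ (hz ▸ coordPosPart_sub_self_mem_orthant (x' - x))
      rwa [add_sub_cancel] at this
    rw [tConj_coordPosPart ht hHmono]
    exact EReal.sub_le_sub (EReal.coe_le_coe_iff.mpr hφ) le_rfl

/-- for `φ` Lipschitz and `ℝ_+^D`-increasing and `H` locally Lipschitz,
`ℝ_+^D`-increasing, convex and bounded below, the two Hopf–Lax formulas
`sup_{y ∈ ℝ_+^D} (φ(x+y) − (tH)*(y))` and `sup_{x' ∈ ℝ_+^D} (φ(x') − (tH)*(x'−x))`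
coincide for every `x ∈ ℝ_+^D`. -/
theorem hopfLax_eq_shifted (D : ℕ) (hD : 1 ≤ D)
    (φ : EuclideanSpace ℝ (Fin D) → ℝ) (K : ℝ≥0)
    (hφlip : LipschitzOnWith K φ (orthant D))
    (hφmono : ∀ x ∈ orthant D, ∀ y ∈ orthant D, φ x ≤ φ (x + y))
    (H : EuclideanSpace ℝ (Fin D) → ℝ)
    (hHloc : ∀ x ∈ orthant D, ∃ (K' : ℝ≥0) (ε : ℝ), 0 < ε ∧
      LipschitzOnWith K' H (orthant D ∩ Metric.ball x ε))
    (hHmono : ∀ x ∈ orthant D, ∀ y ∈ orthant D, H x ≤ H (x + y))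
    (hHconv : ConvexOn ℝ (orthant D) H)
    (hHbdd : ∃ m : ℝ, ∀ x ∈ orthant D, m ≤ H x)
    (t : ℝ) (ht : 0 ≤ t)
    (x : EuclideanSpace ℝ (Fin D)) (hx : x ∈ orthant D) :
    (⨆ y : orthant D, ((φ (x + y.1) : EReal) - tConj D t H y.1)) =
      ⨆ x' : orthant D, ((φ x'.1 : EReal) - tConj D t H (x'.1 - x)) :=
  hopfLax_eq_shifted_general D φ hφmono H hHmono t ht x hx
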